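/- Let ν be a compactly supported probability measure on ℝ with barycenter ρ, and suppose the Div-Curl identity ⟨ν; |k−ρ|⟩ · ( G(ρ) − ⟨ν; G(k)⟩ ) = 0 holds, where G is strictly convex. Then ν = δ_ρ. -/

import Mathlib

open MeasureTheory Filter

theorem Continuous.integrable_of_measure_compl_eq_zero {X E : Type*} [TopologicalSpace X]
    [T2Space X] [MeasurableSpace X] [OpensMeasurableSpace X] [NormedAddCommGroup E]
    {μ : Measure X} [IsFiniteMeasure μ] {K : Set X} (hK : IsCompact K) (hμK : μ Kᶜ = 0)
    {f : X → E} (hf : Continuous f) : Integrable f μ := by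
  rw [← Measure.restrict_eq_self_of_ae_mem (ae_iff.mpr hμK)]
  exact hf.continuousOn.integrableOn_compact hK

theorem MeasureTheory.Measure.eq_dirac_of_ae_eq_const {α : Type*} [MeasurableSpace α]
    {μ : Measure α} [IsProbabilityMeasure μ] {a : α} (h : ∀ᵐ x ∂μ, x = a) :
    μ = Measure.dirac a := by
  calc μ = μ.map id := Measure.map_id.symm
    _ = μ.map (fun _ ↦ a) := Measure.map_congr h
    _ = Measure.dirac a := by simp [Measure.map_const]

theorem ae_eq_of_integral_abs_sub_eq_zero {α : Type*} [MeasurableSpace α] {μ : Measure α}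
    [IsFiniteMeasure μ] {f : α → ℝ} (hf : Integrable f μ) {c : ℝ}
    (h : ∫ x, |f x - c| ∂μ = 0) : ∀ᵐ x ∂μ, f x = c := by
  have hint : Integrable (fun x ↦ |f x - c|) μ := (hf.sub (integrable_const c)).abs
  filter_upwards [(integral_eq_zero_iff_of_nonneg (fun _ ↦ abs_nonneg _) hint).mp h] with x hx
  simpa [sub_eq_zero] using hx

theorem StrictConvexOn.ae_eq_integral_of_map_integral_eq {α E : Type*} [MeasurableSpace α]
    {μ : Measure α} [IsProbabilityMeasure μ] [NormedAddCommGroup E] [NormedSpace ℝ E]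
    [CompleteSpace E] {g : E → ℝ} (hg : StrictConvexOn ℝ Set.univ g) (hgc : Continuous g)
    {f : α → E} (hf : Integrable f μ) (hgf : Integrable (g ∘ f) μ)
    (h : g (∫ x, f x ∂μ) = ∫ x, g (f x) ∂μ) : ∀ᵐ x ∂μ, f x = ∫ x, f x ∂μ := by
  have jensen := hg.ae_eq_const_or_map_average_lt hgc.continuousOn isClosed_univ
    (Eventually.of_forall fun _ ↦ Set.mem_univ _) hf hgf
  rw [average_eq_integral, average_eq_integral, h] at jensen
  exact jensen.resolve_right (lt_irrefl _)

theorem divcurl_identity_implies_dirac_general (ν : Measure ℝ)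
    [IsProbabilityMeasure ν] (K : Set ℝ) (hK : IsCompact K) (hsupp : ν Kᶜ = 0)
    (G : ℝ → ℝ) (hconv : StrictConvexOn ℝ Set.univ G)
    (ρ : ℝ) (hρ : ρ = ∫ k : ℝ, k ∂ν)
    (hfac : (∫ k : ℝ, |k - ρ| ∂ν) * (G ρ - ∫ k : ℝ, G k ∂ν) = 0) :
    ν = Measure.dirac ρ := by
  have hGc : Continuous G := continuousOn_univ.mp (hconv.convexOn.continuousOn isOpen_univ)
  have hid : Integrable id ν := continuous_id.integrable_of_measure_compl_eq_zero hK hsupp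
  refine Measure.eq_dirac_of_ae_eq_const ?_
  rcases mul_eq_zero.mp hfac with h | h
  · exact ae_eq_of_integral_abs_sub_eq_zero hid h
  · rw [hρ]
    refine hconv.ae_eq_integral_of_map_integral_eq hGc hid
      (hGc.integrable_of_measure_compl_eq_zero hK hsupp) ?_
    rw [← hρ, sub_eq_zero.mp h]

/-- if a compactly supported probability measure `ν` with
barycenter `ρ` satisfies the Div-Curl identity
`⟨ν; |k−ρ|⟩ · (G(ρ) − ⟨ν; G⟩) = 0` with `G` strictly convex, then `ν = δ_ρ`. -/
theorem divcurl_identity_implies_dirac (ν : Measure ℝ)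
    [IsProbabilityMeasure ν] (K : Set ℝ) (hK : IsCompact K) (hsupp : ν Kᶜ = 0)
    (G : ℝ → ℝ) (hG : ContDiff ℝ 2 G) (hconv : StrictConvexOn ℝ Set.univ G)
    (ρ : ℝ) (hρ : ρ = ∫ k : ℝ, k ∂ν)
    (hfac : (∫ k : ℝ, |k - ρ| ∂ν) * (G ρ - ∫ k : ℝ, G k ∂ν) = 0) :
    ν = Measure.dirac ρ :=
  divcurl_identity_implies_dirac_general ν K hK hsupp G hconv ρ hρ hfac
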